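/- arXiv:1007.2109 — 4 statements merged into one kernel-verified Lean document; each statement's English description precedes it below -/
import Mathlib

section
/- For every real α ∈ (0,2), and every real v, we have |v|^α = (Γ(α+1) sin(πα/2)/π) ∫_ℝ (1 - cos(ωv)) / |ω|^(α+1) dω. -/
/-!
Both sides are homogeneous of degree `α` in `v`, so it suffices to compute
`∫ (1 - cos ω) / |ω| ^ (α + 1) = 2 ∫₀^∞ (1 - cos u) / u ^ (α + 1) du`. Writing
`Γ(α + 1) / u ^ (α + 1) = ∫₀^∞ t ^ α e^{-tu} dt` and using the Laplace transform
`∫₀^∞ (1 - cos u) e^{-tu} du = 1 / (t (1 + t²))`, Fubini turns `Γ(α + 1)` times the half-line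
integral into the Mellin integral `∫₀^∞ t ^ (α - 1) / (1 + t²) dt`. Writing
`1 / (1 + t²) = ∫₀^∞ e^{-(1 + t²) u} du` and applying Fubini once more evaluates it as
`Γ(α/2) Γ(1 - α/2) / 2 = π / (2 sin (π α / 2))` by Euler's reflection formula.
-/

open Real MeasureTheory Set Filter

theorem integrableOn_exp_neg_mul_Ioi {r : ℝ} (hr : 0 < r) :
    IntegrableOn (fun u => exp (-(r * u))) (Ioi 0) := by
  simpa only [neg_mul] using exp_neg_integrableOn_Ioi 0 hr

theorem integral_exp_neg_mul_Ioi {r : ℝ} (hr : 0 < r) :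
    ∫ u in Ioi (0 : ℝ), exp (-(r * u)) = 1 / r := by
  simpa [neg_mul] using integral_exp_mul_Ioi (neg_neg_iff_pos.mpr hr) 0

theorem cos_mul_exp_neg_mul_eq_re (t u : ℝ) :
    cos u * exp (-(t * u)) = (Complex.exp ((-t + Complex.I) * u)).re := by
  rw [Complex.exp_re]
  simp [mul_comm]

section Laplace

variable {t : ℝ}

theorem integrableOn_cos_mul_exp_neg_mul_Ioi (ht : 0 < t) :
    IntegrableOn (fun u => cos u * exp (-(t * u))) (Ioi 0) := by
  simp_rw [cos_mul_exp_neg_mul_eq_re]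
  exact (integrableOn_exp_mul_complex_Ioi (by simpa using ht) 0).re

theorem integral_cos_mul_exp_neg_mul_Ioi (ht : 0 < t) :
    ∫ u in Ioi (0 : ℝ), cos u * exp (-(t * u)) = t / (1 + t ^ 2) := by
  have hre : (-t + Complex.I).re < 0 := by simpa using ht
  simp_rw [cos_mul_exp_neg_mul_eq_re]
  refine (integral_re (integrableOn_exp_mul_complex_Ioi hre 0)).trans ?_
  rw [RCLike.re_to_complex, integral_exp_mul_complex_Ioi hre]
  simp [Complex.div_re, Complex.normSq, sq, add_comm]

theorem integrableOn_one_sub_cos_mul_exp_neg_mul_Ioi (ht : 0 < t) :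
    IntegrableOn (fun u => (1 - cos u) * exp (-(t * u))) (Ioi 0) := by
  simp_rw [sub_mul, one_mul]
  exact (integrableOn_exp_neg_mul_Ioi ht).sub (integrableOn_cos_mul_exp_neg_mul_Ioi ht)

theorem integral_one_sub_cos_mul_exp_neg_mul_Ioi (ht : 0 < t) :
    ∫ u in Ioi (0 : ℝ), (1 - cos u) * exp (-(t * u)) = 1 / (t * (1 + t ^ 2)) := by
  simp_rw [sub_mul, one_mul]
  rw [integral_sub (integrableOn_exp_neg_mul_Ioi ht) (integrableOn_cos_mul_exp_neg_mul_Ioi ht),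
    integral_exp_neg_mul_Ioi ht, integral_cos_mul_exp_neg_mul_Ioi ht]
  field_simp
  ring

end Laplace

theorem exp_neg_one_add_mul (a u : ℝ) : exp (-((1 + a) * u)) = exp (-u) * exp (-u * a) := by
  rw [← exp_add]
  ring_nf

section Mellin

variable {p q : ℝ}

theorem integral_rpow_mul_exp_neg_one_add_rpow_mul (hp : 0 < p) (hq : -1 < q) {u : ℝ}
    (hu : 0 < u) :
    ∫ x in Ioi (0 : ℝ), x ^ q * exp (-((1 + x ^ p) * u)) =
      Gamma ((q + 1) / p) / p * (exp (-u) * u ^ ((1 - (q + 1) / p) - 1)) := by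
  simp_rw [exp_neg_one_add_mul, mul_left_comm _ (exp (-u))]
  rw [integral_const_mul, integral_rpow_mul_exp_neg_mul_rpow hp hq hu,
    show (1 - (q + 1) / p) - 1 = -(q + 1) / p by ring]
  ring

theorem integrable_rpow_mul_exp_neg_one_add_rpow_mul (hp : 0 < p) (hq : -1 < q)
    (hqp : q < p - 1) :
    Integrable (fun z : ℝ × ℝ => z.1 ^ q * exp (-((1 + z.1 ^ p) * z.2)))
      ((volume.restrict (Ioi 0)).prod (volume.restrict (Ioi 0))) := by
  have hs : 0 < 1 - (q + 1) / p := by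
    rw [sub_pos, div_lt_one hp]
    linarith
  refine (integrable_prod_iff' (by fun_prop)).mpr ⟨?_, ?_⟩
  · filter_upwards [ae_restrict_mem measurableSet_Ioi] with u (hu : 0 < u)
    simp_rw [exp_neg_one_add_mul, mul_left_comm _ (exp (-u))]
    exact (integrableOn_rpow_mul_exp_neg_mul_rpow hq hp hu).const_mul _
  · refine ((GammaIntegral_convergent hs).const_mul (Gamma ((q + 1) / p) / p)).congr ?_
    filter_upwards [ae_restrict_mem measurableSet_Ioi] with u (hu : 0 < u)
    rw [← integral_rpow_mul_exp_neg_one_add_rpow_mul hp hq hu]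
    refine setIntegral_congr_fun measurableSet_Ioi fun x (hx : 0 < x) => ?_
    exact (Real.norm_of_nonneg (by positivity)).symm

theorem integral_mul_exp_neg_one_add_rpow_mul {x : ℝ} (hx : 0 < x) :
    ∫ u in Ioi (0 : ℝ), x ^ q * exp (-((1 + x ^ p) * u)) = x ^ q / (1 + x ^ p) := by
  rw [integral_const_mul, integral_exp_neg_mul_Ioi (by positivity), mul_one_div]

theorem integrableOn_rpow_div_one_add_rpow (hp : 0 < p) (hq : -1 < q) (hqp : q < p - 1) :
    IntegrableOn (fun x : ℝ => x ^ q / (1 + x ^ p)) (Ioi 0) :=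
  (integrable_rpow_mul_exp_neg_one_add_rpow_mul hp hq hqp).integral_prod_left.congr <| by
    filter_upwards [ae_restrict_mem measurableSet_Ioi] with x hx
    exact integral_mul_exp_neg_one_add_rpow_mul hx

theorem integral_rpow_div_one_add_rpow (hp : 0 < p) (hq : -1 < q) (hqp : q < p - 1) :
    ∫ x in Ioi (0 : ℝ), x ^ q / (1 + x ^ p) = π / (p * sin (π * ((q + 1) / p))) := by
  have hs : 0 < 1 - (q + 1) / p := by
    rw [sub_pos, div_lt_one hp]
    linarith
  calc ∫ x in Ioi (0 : ℝ), x ^ q / (1 + x ^ p)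
      = ∫ x in Ioi (0 : ℝ), ∫ u in Ioi (0 : ℝ), x ^ q * exp (-((1 + x ^ p) * u)) :=
        setIntegral_congr_fun measurableSet_Ioi fun x hx =>
          (integral_mul_exp_neg_one_add_rpow_mul hx).symm
    _ = ∫ u in Ioi (0 : ℝ), ∫ x in Ioi (0 : ℝ), x ^ q * exp (-((1 + x ^ p) * u)) :=
        integral_integral_swap (integrable_rpow_mul_exp_neg_one_add_rpow_mul hp hq hqp)
    _ = ∫ u in Ioi (0 : ℝ), Gamma ((q + 1) / p) / p * (exp (-u) * u ^ ((1 - (q + 1) / p) - 1)) :=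
        setIntegral_congr_fun measurableSet_Ioi fun u hu =>
          integral_rpow_mul_exp_neg_one_add_rpow_mul hp hq hu
    _ = Gamma ((q + 1) / p) * Gamma (1 - (q + 1) / p) / p := by
        rw [integral_const_mul, ← Gamma_eq_integral hs, div_mul_eq_mul_div]
    _ = π / (p * sin (π * ((q + 1) / p))) := by
        rw [Gamma_mul_Gamma_one_sub, div_div, mul_comm p]

end Mellin

section OneSubCos

variable {α : ℝ}

theorem integral_rpow_mul_exp_neg_mul_Ioi_eq_Gamma_div (hα : -1 < α) {u : ℝ} (hu : 0 < u) :
    ∫ t in Ioi (0 : ℝ), t ^ α * exp (-(t * u)) = Gamma (α + 1) / u ^ (α + 1) := by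
  have := integral_rpow_mul_exp_neg_mul_Ioi (a := α + 1) (by linarith) hu
  simp_rw [add_sub_cancel_right, mul_comm u] at this
  rw [this, div_rpow zero_le_one hu.le, one_rpow]
  ring

theorem integral_rpow_mul_one_sub_cos_mul_exp_neg_mul_Ioi {t : ℝ} (ht : 0 < t) :
    ∫ u in Ioi (0 : ℝ), t ^ α * ((1 - cos u) * exp (-(t * u))) =
      t ^ (α - 1) / (1 + t ^ (2 : ℝ)) := by
  rw [integral_const_mul, integral_one_sub_cos_mul_exp_neg_mul_Ioi ht, rpow_sub_one ht.ne',
    rpow_two]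
  field_simp

theorem integrable_rpow_mul_one_sub_cos_mul_exp_neg_mul (hα0 : 0 < α) (hα2 : α < 2) :
    Integrable (fun z : ℝ × ℝ => z.1 ^ α * ((1 - cos z.2) * exp (-(z.1 * z.2))))
      ((volume.restrict (Ioi 0)).prod (volume.restrict (Ioi 0))) := by
  refine (integrable_prod_iff (by fun_prop)).mpr ⟨?_, ?_⟩
  · filter_upwards [ae_restrict_mem measurableSet_Ioi] with t (ht : 0 < t)
    exact (integrableOn_one_sub_cos_mul_exp_neg_mul_Ioi ht).const_mul _
  · refine (integrableOn_rpow_div_one_add_rpow (q := α - 1) two_pos (by linarith)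
      (by linarith)).congr ?_
    filter_upwards [ae_restrict_mem measurableSet_Ioi] with t (ht : 0 < t)
    have hnonneg : ∀ u, 0 ≤ t ^ α * ((1 - cos u) * exp (-(t * u))) := fun u => by
      have : 0 ≤ 1 - cos u := by linarith [cos_le_one u]
      positivity
    simp_rw [Real.norm_of_nonneg (hnonneg _)]
    exact (integral_rpow_mul_one_sub_cos_mul_exp_neg_mul_Ioi ht).symm

theorem Gamma_mul_integral_one_sub_cos_div_rpow (hα0 : 0 < α) (hα2 : α < 2) :
    Gamma (α + 1) * ∫ u in Ioi (0 : ℝ), (1 - cos u) / u ^ (α + 1) =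
      ∫ t in Ioi (0 : ℝ), t ^ (α - 1) / (1 + t ^ (2 : ℝ)) := by
  calc Gamma (α + 1) * ∫ u in Ioi (0 : ℝ), (1 - cos u) / u ^ (α + 1)
      = ∫ u in Ioi (0 : ℝ), ∫ t in Ioi (0 : ℝ), t ^ α * ((1 - cos u) * exp (-(t * u))) := by
        rw [← integral_const_mul]
        refine setIntegral_congr_fun measurableSet_Ioi fun u (hu : 0 < u) => ?_
        simp_rw [mul_left_comm _ (1 - cos u)]
        rw [integral_const_mul, integral_rpow_mul_exp_neg_mul_Ioi_eq_Gamma_div (by linarith) hu]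
        ring
    _ = ∫ t in Ioi (0 : ℝ), ∫ u in Ioi (0 : ℝ), t ^ α * ((1 - cos u) * exp (-(t * u))) :=
        (integral_integral_swap (integrable_rpow_mul_one_sub_cos_mul_exp_neg_mul hα0 hα2)).symm
    _ = ∫ t in Ioi (0 : ℝ), t ^ (α - 1) / (1 + t ^ (2 : ℝ)) :=
        setIntegral_congr_fun measurableSet_Ioi fun _ ht =>
          integral_rpow_mul_one_sub_cos_mul_exp_neg_mul_Ioi ht

theorem sin_pi_mul_div_two_pos (hα0 : 0 < α) (hα2 : α < 2) : 0 < sin (π * α / 2) :=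
  sin_pos_of_pos_of_lt_pi (by positivity) (by nlinarith [pi_pos])

theorem integral_one_sub_cos_div_abs_rpow (hα0 : 0 < α) (hα2 : α < 2) :
    ∫ ω : ℝ, (1 - cos ω) / |ω| ^ (α + 1) = π / (Gamma (α + 1) * sin (π * α / 2)) := by
  have hmellin := integral_rpow_div_one_add_rpow (q := α - 1) two_pos (by linarith) (by linarith)
  rw [← Gamma_mul_integral_one_sub_cos_div_rpow hα0 hα2, sub_add_cancel, mul_div_assoc']
    at hmellin
  have hsin := sin_pi_mul_div_two_pos hα0 hα2
  have hGamma : 0 < Gamma (α + 1) := Gamma_pos_of_pos (by linarith)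
  have hsymm : ∫ ω : ℝ, (1 - cos ω) / |ω| ^ (α + 1) =
      2 * ∫ u in Ioi (0 : ℝ), (1 - cos u) / u ^ (α + 1) := by
    rw [← integral_comp_abs (f := fun u => (1 - cos u) / u ^ (α + 1))]
    simp only [cos_abs]
  rw [hsymm, eq_div_iff (by positivity)]
  rw [eq_div_iff (by positivity)] at hmellin
  linear_combination hmellin

end OneSubCos

theorem integral_comp_mul_div_abs_rpow (g : ℝ → ℝ) (s : ℝ) {v : ℝ} (hv : v ≠ 0) :
    ∫ ω : ℝ, g (ω * v) / |ω| ^ s = |v| ^ (s - 1) * ∫ ω : ℝ, g ω / |ω| ^ s := by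
  have hv' : 0 < |v| := abs_pos.mpr hv
  have hpt : ∀ ω : ℝ, g (ω * v) / |ω| ^ s = |v| ^ s * (g (ω * v) / |ω * v| ^ s) := fun ω => by
    rw [abs_mul, mul_rpow (abs_nonneg ω) hv'.le, ← div_div,
      mul_div_cancel₀ _ (rpow_pos_of_pos hv' s).ne']
  simp_rw [hpt]
  rw [integral_const_mul, Measure.integral_comp_mul_right (fun ω => g ω / |ω| ^ s), smul_eq_mul,
    ← mul_assoc, abs_inv, ← div_eq_mul_inv, rpow_sub_one hv'.ne']

theorem vonBahrEssen_abs_rpow (α : ℝ) (hα : α ∈ Set.Ioo (0:ℝ) 2) (v : ℝ) :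
    |v| ^ α = (Real.Gamma (α + 1) * Real.sin (π * α / 2) / π) *
      ∫ ω : ℝ, (1 - Real.cos (ω * v)) / |ω| ^ (α + 1) := by
  obtain ⟨hα0, hα2⟩ := hα
  rcases eq_or_ne v 0 with rfl | hv
  · simp [zero_rpow hα0.ne']
  have hsin := (sin_pi_mul_div_two_pos hα0 hα2).ne'
  have hGamma : Gamma (α + 1) ≠ 0 := (Gamma_pos_of_pos (by linarith)).ne'
  rw [integral_comp_mul_div_abs_rpow (fun ω => 1 - cos ω) _ hv, add_sub_cancel_right,
    integral_one_sub_cos_div_abs_rpow hα0 hα2, mul_left_comm,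
    div_mul_div_cancel₀' (mul_ne_zero hGamma hsin), div_self pi_ne_zero, mul_one]
end

section
/- For every real α ∈ (1,2) and every real v, sign(v)|v|^α = (Γ(α+1) cos(πα/2)/π) ∫_ℝ sign(ω)(sin(ωv) - ωv) / |ω|^(α+1) dω. -/
/-!
Writing `x ^ (-(α + 1)) = Γ(α + 1)⁻¹ ∫₀^∞ t ^ α e^(-x t) dt` and exchanging the integrals (the
integrand is nonnegative), `∫₀^∞ (x - sin x) x ^ (-(α + 1)) dx` becomes
`Γ(α + 1)⁻¹ ∫₀^∞ t ^ α (1 / t ^ 2 - 1 / (1 + t ^ 2)) dt`, because `1 / t ^ 2` and `1 / (1 + t ^ 2)`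
are the Laplace transforms of `x` and `sin x`. The remaining integral
`∫₀^∞ t ^ (s - 1) / (1 + t ^ 2) dt = Γ(s / 2) Γ(1 - s / 2) / 2 = π / (2 sin (π s / 2))` is computed
the same way from `1 / (1 + t ^ 2) = ∫₀^∞ e^(-(1 + t ^ 2) u) du`. The integral over `ℝ` reduces to
this one: its integrand is even in `ω`, and the substitution `ω ↦ ω / |v|` extracts `|v| ^ α`.
-/

open Real MeasureTheory Set Function

section Tonelli

variable {X Y : Type*} [MeasurableSpace X] [MeasurableSpace Y] {μ : Measure X} {ν : Measure Y}
  [SFinite μ] [SFinite ν]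

theorem integrable_uncurry_of_nonneg {f : X → Y → ℝ}
    (hf : AEStronglyMeasurable (uncurry f) (μ.prod ν)) (hf_nonneg : ∀ᵐ y ∂ν, ∀ᵐ x ∂μ, 0 ≤ f x y)
    (hf_slice : ∀ᵐ y ∂ν, Integrable (f · y) μ) (hf_int : Integrable (fun y ↦ ∫ x, f x y ∂μ) ν) :
    Integrable (uncurry f) (μ.prod ν) := by
  refine (integrable_prod_iff' hf).2 ⟨hf_slice, hf_int.congr ?_⟩
  filter_upwards [hf_nonneg] with y hy
  exact integral_congr_ae (hy.mono fun x hx ↦ (norm_of_nonneg hx).symm)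

end Tonelli

theorem integrableOn_sin_mul_exp_neg_mul {t : ℝ} (ht : 0 < t) :
    IntegrableOn (fun x ↦ sin x * exp (-(t * x))) (Ioi 0) := by
  refine (exp_neg_integrableOn_Ioi 0 ht).mono' (by fun_prop) (ae_of_all _ fun x ↦ ?_)
  rw [norm_mul, norm_of_nonneg (exp_pos _).le, ← neg_mul]
  exact mul_le_of_le_one_left (exp_pos _).le (abs_sin_le_one x)

theorem integral_sin_mul_exp_neg_mul {t : ℝ} (ht : 0 < t) :
    ∫ x in Ioi 0, sin x * exp (-(t * x)) = 1 / (1 + t ^ 2) := by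
  have ha : (-t + Complex.I).re < 0 := by simpa using ht
  have hre : ∀ x : ℝ, sin x * exp (-(t * x)) = Complex.im (Complex.exp ((-t + Complex.I) * x)) := by
    intro x
    simp [Complex.exp_im, mul_comm]
  have h_im := integral_im (integrableOn_exp_mul_complex_Ioi ha 0)
  simp only [RCLike.im_to_complex] at h_im
  simp_rw [hre, h_im, integral_exp_mul_complex_Ioi ha 0]
  have h_normSq : Complex.normSq (-t + Complex.I) = 1 + t ^ 2 := by
    simpa [add_comm] using Complex.normSq_add_mul_I (-t) 1
  simp [h_normSq, neg_div]

theorem integral_mul_exp_neg_mul {t : ℝ} (ht : 0 < t) :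
    ∫ x in Ioi 0, x * exp (-(t * x)) = 1 / t ^ 2 := by
  have := integral_rpow_mul_exp_neg_mul_Ioi two_pos ht
  norm_num [Gamma_two] at this
  simpa only [one_div] using this

theorem integrableOn_mul_exp_neg_mul {t : ℝ} (ht : 0 < t) :
    IntegrableOn (fun x ↦ x * exp (-(t * x))) (Ioi 0) := by
  simpa only [rpow_one, neg_mul] using
    integrableOn_rpow_mul_exp_neg_mul_rpow (s := 1) (p := 1) (by norm_num) one_pos ht

theorem integrableOn_sub_sin_mul_exp_neg_mul {t : ℝ} (ht : 0 < t) :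
    IntegrableOn (fun x ↦ (x - sin x) * exp (-(t * x))) (Ioi 0) := by
  simpa only [sub_mul, Pi.sub_def] using
    (integrableOn_mul_exp_neg_mul ht).sub (integrableOn_sin_mul_exp_neg_mul ht)

theorem integral_sub_sin_mul_exp_neg_mul {t : ℝ} (ht : 0 < t) :
    ∫ x in Ioi 0, (x - sin x) * exp (-(t * x)) = 1 / (t ^ 2 * (1 + t ^ 2)) := by
  simp only [sub_mul]
  rw [integral_sub (integrableOn_mul_exp_neg_mul ht) (integrableOn_sin_mul_exp_neg_mul ht),
    integral_mul_exp_neg_mul ht, integral_sin_mul_exp_neg_mul ht]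
  field_simp
  ring

section RpowDivOneAddSq

variable {s : ℝ}

theorem integral_rpow_mul_exp_neg_mul_sq (hs : 0 < s) {u : ℝ} (hu : 0 < u) :
    ∫ t in Ioi 0, t ^ (s - 1) * exp (-(u * t ^ 2)) = u ^ (-(s / 2)) * Gamma (s / 2) / 2 := by
  have := integral_rpow_mul_exp_neg_mul_rpow two_pos (by linarith : -1 < s - 1) hu
  simp only [rpow_two, sub_add_cancel, neg_mul, neg_div] at this
  rw [this]
  ring

theorem integral_rpow_mul_exp_neg_one_add_sq_mul_eq_Gamma (hs : 0 < s) {u : ℝ} (hu : 0 < u) :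
    ∫ t in Ioi 0, t ^ (s - 1) * exp (-(1 + t ^ 2) * u) =
      exp (-u) * u ^ (1 - s / 2 - 1) * (Gamma (s / 2) / 2) := by
  have h : ∀ t, t ^ (s - 1) * exp (-(1 + t ^ 2) * u) =
      exp (-u) * (t ^ (s - 1) * exp (-(u * t ^ 2))) := by
    intro t
    rw [mul_left_comm, ← exp_add]
    ring_nf
  simp_rw [h]
  rw [integral_const_mul, integral_rpow_mul_exp_neg_mul_sq hs hu]
  ring_nf

theorem integral_rpow_mul_exp_neg_one_add_sq_mul_eq_div {t : ℝ} :
    ∫ u in Ioi 0, t ^ (s - 1) * exp (-(1 + t ^ 2) * u) = t ^ (s - 1) / (1 + t ^ 2) := by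
  have h : -(1 + t ^ 2) < 0 := by nlinarith
  rw [integral_const_mul, integral_exp_mul_Ioi h, mul_zero, exp_zero, neg_div_neg_eq, mul_one_div]

theorem integrable_rpow_mul_exp_neg_one_add_sq_mul (hs0 : 0 < s) (hs2 : s < 2) :
    Integrable (uncurry fun t u : ℝ ↦ t ^ (s - 1) * exp (-(1 + t ^ 2) * u))
      ((volume.restrict (Ioi 0)).prod (volume.restrict (Ioi 0))) := by
  refine integrable_uncurry_of_nonneg (by fun_prop) ?_ ?_ ?_
  · exact ae_of_all _ fun u ↦ (ae_restrict_iff' measurableSet_Ioi).2 <|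
      ae_of_all _ fun t (ht : 0 < t) ↦ by positivity
  · filter_upwards [ae_restrict_mem measurableSet_Ioi] with u (hu : 0 < u)
    have h := (integrableOn_rpow_mul_exp_neg_mul_rpow (by linarith : -1 < s - 1) two_pos
      hu).const_mul (exp (-u))
    refine IntegrableOn.congr_fun h (fun t _ ↦ ?_) measurableSet_Ioi
    simp only [rpow_two]
    rw [mul_left_comm, ← exp_add]
    ring_nf
  · refine IntegrableOn.congr_fun
      ((GammaIntegral_convergent (by linarith : 0 < 1 - s / 2)).mul_const (Gamma (s / 2) / 2))
      (fun u hu ↦ ?_) measurableSet_Ioi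
    rw [integral_rpow_mul_exp_neg_one_add_sq_mul_eq_Gamma hs0 hu]

theorem integrableOn_rpow_div_one_add_sq (hs0 : 0 < s) (hs2 : s < 2) :
    IntegrableOn (fun t : ℝ ↦ t ^ (s - 1) / (1 + t ^ 2)) (Ioi 0) :=
  IntegrableOn.congr_fun (integrable_rpow_mul_exp_neg_one_add_sq_mul hs0 hs2).integral_prod_left
    (fun _ _ ↦ integral_rpow_mul_exp_neg_one_add_sq_mul_eq_div) measurableSet_Ioi

theorem integral_rpow_div_one_add_sq (hs0 : 0 < s) (hs2 : s < 2) :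
    ∫ t in Ioi 0, t ^ (s - 1) / (1 + t ^ 2) = π / (2 * sin (π * s / 2)) :=
  calc ∫ t in Ioi 0, t ^ (s - 1) / (1 + t ^ 2)
      = ∫ t in Ioi 0, ∫ u in Ioi 0, t ^ (s - 1) * exp (-(1 + t ^ 2) * u) :=
        (setIntegral_congr_fun measurableSet_Ioi
          fun _ _ ↦ integral_rpow_mul_exp_neg_one_add_sq_mul_eq_div).symm
    _ = ∫ u in Ioi 0, ∫ t in Ioi 0, t ^ (s - 1) * exp (-(1 + t ^ 2) * u) :=
        integral_integral_swap (integrable_rpow_mul_exp_neg_one_add_sq_mul hs0 hs2)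
    _ = ∫ u in Ioi 0, exp (-u) * u ^ (1 - s / 2 - 1) * (Gamma (s / 2) / 2) :=
        setIntegral_congr_fun measurableSet_Ioi
          fun _ hu ↦ integral_rpow_mul_exp_neg_one_add_sq_mul_eq_Gamma hs0 hu
    _ = Gamma (s / 2) * Gamma (1 - s / 2) / 2 := by
        rw [integral_mul_const, ← Gamma_eq_integral (by linarith)]
        ring
    _ = π / (2 * sin (π * s / 2)) := by
        rw [Gamma_mul_Gamma_one_sub, mul_div_assoc]
        ring

end RpowDivOneAddSq

section SubSinDivRpow

variable {α : ℝ}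

theorem integral_rpow_mul_exp_neg_mul_eq_Gamma_div (hα : -1 < α) {x : ℝ} (hx : 0 < x) :
    ∫ t in Ioi 0, t ^ α * exp (-(x * t)) = Gamma (α + 1) / x ^ (α + 1) := by
  have := integral_rpow_mul_exp_neg_mul_Ioi (by linarith : 0 < α + 1) hx
  rw [add_sub_cancel_right] at this
  rw [this, div_rpow zero_le_one hx.le, one_rpow]
  ring

theorem integral_sub_sin_mul_rpow_mul_exp_neg_mul {t : ℝ} (ht : 0 < t) :
    ∫ x in Ioi 0, (x - sin x) * (t ^ α * exp (-(x * t))) = t ^ (α - 1 - 1) / (1 + t ^ 2) := by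
  have h : ∀ x, (x - sin x) * (t ^ α * exp (-(x * t))) =
      t ^ α * ((x - sin x) * exp (-(t * x))) := fun x ↦ by ring_nf
  simp_rw [h]
  rw [integral_const_mul, integral_sub_sin_mul_exp_neg_mul ht, sub_sub, one_add_one_eq_two,
    rpow_sub ht, rpow_two]
  field_simp

theorem integrable_sub_sin_mul_rpow_mul_exp_neg_mul (h1 : 1 < α) (h3 : α < 3) :
    Integrable (uncurry fun x t : ℝ ↦ (x - sin x) * (t ^ α * exp (-(x * t))))
      ((volume.restrict (Ioi 0)).prod (volume.restrict (Ioi 0))) := by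
  refine integrable_uncurry_of_nonneg (by fun_prop) ?_ ?_ ?_
  · filter_upwards [ae_restrict_mem measurableSet_Ioi] with t (ht : 0 < t)
    filter_upwards [ae_restrict_mem measurableSet_Ioi] with x (hx : 0 < x)
    have := sin_le hx.le
    exact mul_nonneg (by linarith) (by positivity)
  · filter_upwards [ae_restrict_mem measurableSet_Ioi] with t (ht : 0 < t)
    refine IntegrableOn.congr_fun ((integrableOn_sub_sin_mul_exp_neg_mul ht).const_mul (t ^ α))
      (fun x _ ↦ by ring_nf) measurableSet_Ioi
  · exact IntegrableOn.congr_fun (integrableOn_rpow_div_one_add_sq (by linarith) (by linarith))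
      (fun _ ht ↦ (integral_sub_sin_mul_rpow_mul_exp_neg_mul ht).symm) measurableSet_Ioi

theorem integral_sub_sin_div_rpow (h1 : 1 < α) (h3 : α < 3) :
    ∫ x in Ioi 0, (x - sin x) / x ^ (α + 1) = -(π / (2 * Gamma (α + 1) * cos (π * α / 2))) := by
  have hΓ : Gamma (α + 1) ≠ 0 := (Gamma_pos_of_pos (by linarith)).ne'
  have h_sin : sin (π * (α - 1) / 2) = -cos (π * α / 2) := by
    rw [show π * (α - 1) / 2 = π * α / 2 - π / 2 by ring, sin_sub_pi_div_two]
  have h_main : Gamma (α + 1) * ∫ x in Ioi 0, (x - sin x) / x ^ (α + 1) =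
      π / (2 * sin (π * (α - 1) / 2)) :=
    calc Gamma (α + 1) * ∫ x in Ioi 0, (x - sin x) / x ^ (α + 1)
        = ∫ x in Ioi 0, ∫ t in Ioi 0, (x - sin x) * (t ^ α * exp (-(x * t))) := by
          rw [← integral_const_mul]
          refine setIntegral_congr_fun measurableSet_Ioi fun x hx ↦ ?_
          rw [integral_const_mul, integral_rpow_mul_exp_neg_mul_eq_Gamma_div (by linarith) hx]
          ring
      _ = ∫ t in Ioi 0, ∫ x in Ioi 0, (x - sin x) * (t ^ α * exp (-(x * t))) :=
          integral_integral_swap (integrable_sub_sin_mul_rpow_mul_exp_neg_mul h1 h3)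
      _ = ∫ t in Ioi 0, t ^ (α - 1 - 1) / (1 + t ^ 2) :=
          setIntegral_congr_fun measurableSet_Ioi
            fun _ ht ↦ integral_sub_sin_mul_rpow_mul_exp_neg_mul ht
      _ = π / (2 * sin (π * (α - 1) / 2)) :=
          integral_rpow_div_one_add_sq (by linarith) (by linarith)
  rw [h_sin, mul_comm, ← eq_div_iff hΓ] at h_main
  rw [h_main]
  ring

end SubSinDivRpow

theorem integral_comp_mul_div_rpow (g : ℝ → ℝ) {w : ℝ} (hw : 0 < w) (α : ℝ) :
    ∫ y in Ioi 0, g (y * w) / y ^ (α + 1) = w ^ α * ∫ x in Ioi 0, g x / x ^ (α + 1) := by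
  have h (y : ℝ) (hy : y ∈ Ioi 0) :
      g (y * w) / y ^ (α + 1) = w ^ (α + 1) * (g (w * y) / (w * y) ^ (α + 1)) := by
    have : 0 < w ^ (α + 1) := rpow_pos_of_pos hw _
    rw [mul_rpow hw.le (le_of_lt hy), mul_comm y w]
    field_simp
  rw [setIntegral_congr_fun measurableSet_Ioi h, integral_const_mul,
    integral_comp_mul_left_Ioi (fun x ↦ g x / x ^ (α + 1)) 0 hw, mul_zero, smul_eq_mul,
    ← mul_assoc, rpow_add hw, rpow_one, mul_inv_cancel_right₀ hw.ne']

theorem sign_mul_sin_mul_sub_mul (ω v : ℝ) :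
    Real.sign ω * (sin (ω * v) - ω * v) = Real.sign v * (sin (|ω| * |v|) - |ω| * |v|) := by
  rcases lt_trichotomy ω 0 with hω | hω | hω <;> rcases lt_trichotomy v 0 with hv | hv | hv <;>
    simp [hω, hv, abs_of_neg, abs_of_pos, sign_of_neg, sign_of_pos] <;> ring

theorem integral_sign_mul_sin_mul_sub_div_abs_rpow {α : ℝ} (h1 : 1 < α) (h3 : α < 3) (v : ℝ) :
    ∫ ω, Real.sign ω * (sin (ω * v) - ω * v) / |ω| ^ (α + 1) =
      Real.sign v * |v| ^ α * (π / (Gamma (α + 1) * cos (π * α / 2))) := by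
  simp_rw [sign_mul_sin_mul_sub_mul, mul_div_assoc]
  rw [integral_const_mul,
    integral_comp_abs (f := fun y ↦ (sin (y * |v|) - y * |v|) / y ^ (α + 1))]
  rcases eq_or_ne v 0 with rfl | hv
  · simp
  rw [integral_comp_mul_div_rpow (fun x ↦ sin x - x) (abs_pos.2 hv)]
  simp_rw [← neg_sub (_ : ℝ) (sin _), neg_div]
  rw [integral_neg, integral_sub_sin_div_rpow h1 h3]
  field_simp

theorem vonBahrEssen_sign_abs_rpow_gt_one (α : ℝ) (hα : α ∈ Set.Ioo (1:ℝ) 2) (v : ℝ) :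
    Real.sign v * |v| ^ α = (Real.Gamma (α + 1) * Real.cos (π * α / 2) / π) *
      ∫ ω : ℝ, Real.sign ω * (Real.sin (ω * v) - ω * v) / |ω| ^ (α + 1) := by
  obtain ⟨h1, h2⟩ := hα
  have hcos : cos (π * α / 2) ≠ 0 :=
    (cos_neg_of_pi_div_two_lt_of_lt (by nlinarith [pi_pos]) (by nlinarith [pi_pos])).ne
  have hΓ : Gamma (α + 1) ≠ 0 := (Gamma_pos_of_pos (by linarith)).ne'
  rw [integral_sign_mul_sin_mul_sub_div_abs_rpow h1 (by linarith) v, mul_left_comm,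
    div_mul_div_cancel₀ pi_ne_zero, div_self (mul_ne_zero hΓ hcos), mul_one]
end

section
/- Let α ∈ (0,2] and M ≥ 1 an integer. For every real x with |x| ≤ 1/2, the series ∑_{ℓ ≥ 0} C(α, ℓ+2M+1) x^ℓ converges absolutely and its absolute value is bounded by 2/(2M+1) + 2 log 2. -/
open Real Finset

/-- Generalized binomial coefficient `C(α, ℓ) = α(α-1)⋯(α-ℓ+1)/ℓ!` for real `α`. -/
noncomputable def genBinom (α : ℝ) (ℓ : ℕ) : ℝ :=
  (∏ j ∈ Finset.range ℓ, (α - j)) / (Nat.factorial ℓ)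

/-!
For `0 ≤ α ≤ 2` every factor of `C(α, m + 1) = α ∏_{j < m} (α - (j + 1)) / (m + 1)!` satisfies
`|α - (j + 1)| ≤ j + 1`, so `|C(α, m + 1)| ≤ 2 / (m + 1)`. Hence, for `|x| ≤ 1/2`, the terms
`ℓ ≥ 1` of the series are dominated by `2 · 2^{-ℓ} / ℓ`, which sum to `2 log 2`, while the term
`ℓ = 0` contributes at most `2 / (2M + 1)`.
-/

lemma abs_prod_range_sub_succ_le_factorial {α : ℝ} (hα : α ∈ Set.Icc (0 : ℝ) 2) (m : ℕ) :
    |∏ j ∈ range m, (α - (j + 1))| ≤ m.factorial := by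
  rw [abs_prod, ← prod_range_add_one_eq_factorial, Nat.cast_prod]
  refine prod_le_prod (fun _ _ => abs_nonneg _) fun j _ => abs_le.mpr ⟨?_, ?_⟩ <;>
    push_cast <;> linarith [hα.1, hα.2, (j.cast_nonneg : (0 : ℝ) ≤ j)]

lemma abs_genBinom_succ_le {α : ℝ} (hα : α ∈ Set.Icc (0 : ℝ) 2) (m : ℕ) :
    |genBinom α (m + 1)| ≤ 2 / (m + 1) := by
  have hprod := abs_prod_range_sub_succ_le_factorial hα m
  have hfac : (0 : ℝ) < m.factorial := by positivity
  rw [genBinom, prod_range_succ', Nat.factorial_succ]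
  push_cast
  rw [sub_zero, mul_comm _ α, abs_div, abs_mul, abs_mul, abs_of_nonneg hα.1,
    abs_of_pos hfac, abs_of_pos (by positivity : (0 : ℝ) < m + 1), mul_div_mul_comm]
  calc α / (m + 1) * (|∏ j ∈ range m, (α - (j + 1))| / m.factorial)
      ≤ 2 / (m + 1) * 1 := by
        gcongr
        · exact hα.2
        · exact (div_le_one hfac).mpr hprod
    _ = 2 / (m + 1) := mul_one _

theorem abs_tsum_mul_pow_le_of_abs_coeff_le {c : ℕ → ℝ} {K r x : ℝ}
    (hc : ∀ n : ℕ, |c (n + 1)| ≤ K / (n + 1)) (hr : r < 1) (hx : |x| ≤ r) :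
    Summable (fun n => |c n * x ^ n|) ∧ |∑' n, c n * x ^ n| ≤ |c 0| + K * -log (1 - r) := by
  have hr0 : 0 ≤ r := (abs_nonneg x).trans hx
  have hK : 0 ≤ K := by simpa using (abs_nonneg _).trans (hc 0)
  have hlog := (hasSum_pow_div_log_of_abs_lt_one (by rwa [abs_of_nonneg hr0])).mul_left K
  have hmajor : ∀ n : ℕ, |c (n + 1) * x ^ (n + 1)| ≤ K * (r ^ (n + 1) / (n + 1)) := fun n => by
    rw [abs_mul, abs_pow]
    refine (mul_le_mul (hc n) (pow_le_pow_left₀ (abs_nonneg x) hx _) (by positivity)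
      (by positivity)).trans_eq ?_
    ring
  have htail : Summable fun n => |c (n + 1) * x ^ (n + 1)| :=
    hlog.summable.of_nonneg_of_le (fun _ => abs_nonneg _) hmajor
  have hsum : Summable fun n => |c n * x ^ n| := (summable_nat_add_iff 1).mp htail
  refine ⟨hsum, ?_⟩
  rw [hsum.of_abs.tsum_eq_zero_add, pow_zero, mul_one]
  have htsum : |∑' n, c (n + 1) * x ^ (n + 1)| ≤ ∑' n, |c (n + 1) * x ^ (n + 1)| :=
    norm_tsum_le_tsum_norm (f := fun n => c (n + 1) * x ^ (n + 1)) htail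
  calc |c 0 + ∑' n, c (n + 1) * x ^ (n + 1)|
      ≤ |c 0| + ∑' n, |c (n + 1) * x ^ (n + 1)| :=
        (abs_add_le _ _).trans (add_le_add le_rfl htsum)
    _ ≤ |c 0| + K * -log (1 - r) :=
        add_le_add le_rfl ((htail.tsum_le_tsum hmajor hlog.summable).trans_eq hlog.tsum_eq)

theorem genBinom_series_bound_general (α : ℝ) (hα : α ∈ Set.Ioc (0:ℝ) 2) (M : ℕ)
    (x : ℝ) (hx : |x| ≤ 1/2) :
    Summable (fun ℓ : ℕ => |genBinom α (ℓ + 2 * M + 1) * x ^ ℓ|) ∧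
    |∑' ℓ : ℕ, genBinom α (ℓ + 2 * M + 1) * x ^ ℓ| ≤ 2 / (2 * M + 1) + 2 * Real.log 2 := by
  have hα' : α ∈ Set.Icc (0 : ℝ) 2 := Set.Ioc_subset_Icc_self hα
  have hcoeff : ∀ n : ℕ, |genBinom α (n + 1 + 2 * M + 1)| ≤ 2 / (n + 1) := fun n => by
    refine (abs_genBinom_succ_le hα' (n + 1 + 2 * M)).trans ?_
    gcongr
    linarith [(M.cast_nonneg : (0 : ℝ) ≤ M)]
  have hlead : |genBinom α (0 + 2 * M + 1)| ≤ 2 / (2 * M + 1) := by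
    simpa using abs_genBinom_succ_le hα' (2 * M)
  have hlog : -log (1 - 1 / 2 : ℝ) = log 2 := by
    rw [show (1 - 1 / 2 : ℝ) = 2⁻¹ by norm_num, log_inv, neg_neg]
  obtain ⟨hsum, hbound⟩ := abs_tsum_mul_pow_le_of_abs_coeff_le
    (c := fun ℓ => genBinom α (ℓ + 2 * M + 1)) hcoeff (by norm_num) hx
  exact ⟨hsum, hbound.trans (by rw [hlog]; linarith)⟩

theorem genBinom_series_bound (α : ℝ) (hα : α ∈ Set.Ioc (0:ℝ) 2) (M : ℕ) (hM : 1 ≤ M)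
    (x : ℝ) (hx : |x| ≤ 1/2) :
    Summable (fun ℓ : ℕ => |genBinom α (ℓ + 2 * M + 1) * x ^ ℓ|) ∧
    |∑' ℓ : ℕ, genBinom α (ℓ + 2 * M + 1) * x ^ ℓ| ≤ 2 / (2 * M + 1) + 2 * Real.log 2 :=
  genBinom_series_bound_general α hα M x hx
end

section
/- Let ψ : ℝ → ℂ satisfy t^m ψ(t) ∈ L¹ for m = 0,…,M with M ≥ 2, ∫ t^m ψ dt = 0 for m = 0,…,M-1, and |ψ̂(ω)|²/|ω| ∈ L¹. Fix α ∈ (0,2), a₁, a₂ > 0, and a bounded measurable ζ : ℝ → ℂ. Then the function P(ω) = ζ(ω) conj(ψ̂(a₁ω)) ψ̂(a₂ω) / |ω|^{α+1} is integrable on ℝ. -/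
/-!
Subtracting the two vanishing moments, `ψ̂ ω = ∫ ψ t (e^{-iωt} - 1 + iωt) dt`, and
`‖e^{ix} - 1 - ix‖ ≤ 2x²` gives `‖ψ̂ ω‖ ≤ C ω²`. Near the origin the integrand is therefore
`O(ω⁴ / |ω|^{α+1})`, which is bounded because `α ≤ 3`. Away from the origin
`|ω| ≤ |ω|^{α+1}` and `2xy ≤ x² + y²` dominate it by the rescaled admissibility integrands
`‖ψ̂ (a ω)‖² / |ω|`.
-/

open Real MeasureTheory Complex
open scoped ComplexConjugate

theorem norm_cexp_I_mul_sub_one_sub_le (x : ℝ) :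
    ‖cexp (I * x) - 1 - I * x‖ ≤ 2 * x ^ 2 := by
  have hIx : ‖I * (x : ℂ)‖ = |x| := by simp
  rcases le_or_gt |x| 1 with hx | hx
  · calc ‖cexp (I * x) - 1 - I * x‖ ≤ ‖I * (x : ℂ)‖ ^ 2 :=
          Complex.norm_exp_sub_one_sub_id_le (hIx.trans_le hx)
      _ ≤ 2 * x ^ 2 := by rw [hIx, sq_abs]; nlinarith [sq_nonneg x]
  · calc ‖cexp (I * x) - 1 - I * x‖ ≤ ‖cexp (I * x) - 1‖ + ‖I * (x : ℂ)‖ := norm_sub_le _ _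
      _ ≤ |x| + |x| := by
          rw [hIx]; gcongr; simpa using Real.norm_exp_I_mul_ofReal_sub_one_le (x := x)
      _ ≤ 2 * x ^ 2 := by rw [← sq_abs]; nlinarith

section FourierMoments

variable {ψ : ℝ → ℂ}

theorem MeasureTheory.Integrable.mul_cexp_neg_I_mul (hψ : Integrable ψ) (ω : ℝ) :
    Integrable fun t : ℝ => ψ t * cexp (-(I * ω * t)) :=
  hψ.mono (hψ.aestronglyMeasurable.mul (by fun_prop))
    (.of_forall fun t => by simp [Complex.norm_exp])

theorem continuous_integral_mul_cexp_neg_I_mul (hψ : Integrable ψ) :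
    Continuous fun ω : ℝ => ∫ t, ψ t * cexp (-(I * ω * t)) :=
  continuous_of_dominated (fun ω => (hψ.mul_cexp_neg_I_mul ω).aestronglyMeasurable)
    (fun ω => .of_forall fun t => by simp [Complex.norm_exp]) hψ.norm
    (.of_forall fun t => by fun_prop)

theorem norm_integral_mul_cexp_neg_I_mul_le (hψ : Integrable ψ)
    (hψ₁ : Integrable fun t : ℝ => (t : ℂ) * ψ t) (hψ₂ : Integrable fun t : ℝ => (t : ℂ) ^ 2 * ψ t)
    (h₀ : ∫ t, ψ t = 0) (h₁ : ∫ t : ℝ, (t : ℂ) * ψ t = 0) (ω : ℝ) :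
    ‖∫ t, ψ t * cexp (-(I * ω * t))‖ ≤ 2 * (∫ t, t ^ 2 * ‖ψ t‖) * ω ^ 2 := by
  set R : ℝ → ℂ := fun t => cexp (I * ↑(-(ω * t))) - 1 - I * ↑(-(ω * t))
  have hsplit : (fun t => ψ t * R t) =
      fun t => ψ t * cexp (-(I * ω * t)) - ψ t + I * ω * ((t : ℂ) * ψ t) := by
    ext t; simp only [R]; push_cast; ring_nf
  have htaylor : ∫ t, ψ t * cexp (-(I * ω * t)) = ∫ t, ψ t * R t := by
    rw [hsplit, integral_add (f := fun t => ψ t * cexp (-(I * ω * t)) - ψ t)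
      ((hψ.mul_cexp_neg_I_mul ω).sub hψ) (hψ₁.const_mul _),
      integral_sub (hψ.mul_cexp_neg_I_mul ω) hψ, integral_const_mul, h₀, h₁]
    ring
  have hdom : Integrable fun t : ℝ => 2 * ω ^ 2 * (t ^ 2 * ‖ψ t‖) :=
    (hψ₂.norm.const_mul (2 * ω ^ 2)).congr (.of_forall fun t => by simp [sq_abs])
  have hpoint : ∀ t, ‖ψ t * R t‖ ≤ 2 * ω ^ 2 * (t ^ 2 * ‖ψ t‖) := fun t =>
    calc ‖ψ t * R t‖ ≤ ‖ψ t‖ * (2 * (-(ω * t)) ^ 2) := by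
          rw [norm_mul]; gcongr; exact norm_cexp_I_mul_sub_one_sub_le _
      _ = 2 * ω ^ 2 * (t ^ 2 * ‖ψ t‖) := by ring
  calc ‖∫ t, ψ t * cexp (-(I * ω * t))‖ = ‖∫ t, ψ t * R t‖ := by rw [htaylor]
    _ ≤ ∫ t, 2 * ω ^ 2 * (t ^ 2 * ‖ψ t‖) := norm_integral_le_of_norm_le hdom (.of_forall hpoint)
    _ = 2 * (∫ t, t ^ 2 * ‖ψ t‖) * ω ^ 2 := by rw [integral_const_mul]; ring

end FourierMoments

section CrossSpectral

variable {g ζ : ℝ → ℂ} {C c α a a₁ a₂ : ℝ}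

theorem norm_mul_conj_mul_div_abs_rpow (ω : ℝ) :
    ‖ζ ω * conj (g (a₁ * ω)) * g (a₂ * ω) / ((|ω| ^ (α + 1) : ℝ) : ℂ)‖ =
      ‖ζ ω‖ * ‖g (a₁ * ω)‖ * ‖g (a₂ * ω)‖ / |ω| ^ (α + 1) := by
  rw [norm_div, norm_mul, norm_mul, RCLike.norm_conj, Complex.norm_real,
    Real.norm_of_nonneg (by positivity)]

theorem norm_mul_conj_mul_div_abs_rpow_le_of_abs_le_one (hgC : ∀ ω, ‖g ω‖ ≤ C * ω ^ 2)
    (hζ : ∀ ω, ‖ζ ω‖ ≤ c) (hα : α ≤ 3) {ω : ℝ} (hω : |ω| ≤ 1) :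
    ‖ζ ω * conj (g (a₁ * ω)) * g (a₂ * ω) / ((|ω| ^ (α + 1) : ℝ) : ℂ)‖ ≤
      c * (C * a₁ ^ 2) * (C * a₂ ^ 2) := by
  have hc : 0 ≤ c := (norm_nonneg _).trans (hζ 0)
  have hC : 0 ≤ C := by simpa using (norm_nonneg _).trans (hgC 1)
  have hnum : ‖ζ ω‖ * ‖g (a₁ * ω)‖ * ‖g (a₂ * ω)‖ ≤ c * (C * a₁ ^ 2) * (C * a₂ ^ 2) * |ω| ^ 4 :=
    calc ‖ζ ω‖ * ‖g (a₁ * ω)‖ * ‖g (a₂ * ω)‖ ≤ c * (C * (a₁ * ω) ^ 2) * (C * (a₂ * ω) ^ 2) := by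
          gcongr <;> apply_rules
      _ = c * (C * a₁ ^ 2) * (C * a₂ ^ 2) * |ω| ^ 4 := by
          rw [show |ω| ^ 4 = (ω ^ 2) ^ 2 by rw [← sq_abs ω]; ring]; ring
  have hpow : |ω| ^ 4 ≤ |ω| ^ (α + 1) := by
    rw [← Real.rpow_natCast]
    exact Real.rpow_le_rpow_of_exponent_ge_of_imp (abs_nonneg ω) hω (by push_cast; linarith)
      fun _ h => by norm_num at h
  rw [norm_mul_conj_mul_div_abs_rpow]
  exact div_le_of_le_mul₀ (by positivity) (by positivity) (hnum.trans (by gcongr))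

theorem norm_mul_conj_mul_div_abs_rpow_le_of_one_le_abs (hζ : ∀ ω, ‖ζ ω‖ ≤ c) (hα : 0 ≤ α)
    {ω : ℝ} (hω : 1 ≤ |ω|) :
    ‖ζ ω * conj (g (a₁ * ω)) * g (a₂ * ω) / ((|ω| ^ (α + 1) : ℝ) : ℂ)‖ ≤
      c / 2 * (‖g (a₁ * ω)‖ ^ 2 / |ω| + ‖g (a₂ * ω)‖ ^ 2 / |ω|) := by
  have hc : 0 ≤ c := (norm_nonneg _).trans (hζ 0)
  have hpow : |ω| ≤ |ω| ^ (α + 1) := Real.self_le_rpow_of_one_le hω (by linarith)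
  rw [norm_mul_conj_mul_div_abs_rpow, ← add_div, mul_div_assoc']
  refine div_le_div₀ (by positivity) ?_ (zero_lt_one.trans_le hω) hpow
  calc ‖ζ ω‖ * ‖g (a₁ * ω)‖ * ‖g (a₂ * ω)‖ = ‖ζ ω‖ * (‖g (a₁ * ω)‖ * ‖g (a₂ * ω)‖) := by ring
    _ ≤ c * ((‖g (a₁ * ω)‖ ^ 2 + ‖g (a₂ * ω)‖ ^ 2) / 2) := by
        gcongr
        · exact hζ ω
        · linarith [two_mul_le_add_sq ‖g (a₁ * ω)‖ ‖g (a₂ * ω)‖]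
    _ = _ := by ring

theorem integrable_norm_sq_comp_mul_left_div_abs (hadm : Integrable fun ω => ‖g ω‖ ^ 2 / |ω|)
    (ha : a ≠ 0) : Integrable fun ω => ‖g (a * ω)‖ ^ 2 / |ω| :=
  ((hadm.comp_mul_left' ha).const_mul |a|).congr (.of_forall fun ω => by
    simp only [abs_mul]; field_simp)

theorem integrable_mul_conj_mul_div_abs_rpow (hg : Measurable g) (hgC : ∀ ω, ‖g ω‖ ≤ C * ω ^ 2)
    (hadm : Integrable fun ω => ‖g ω‖ ^ 2 / |ω|) (hζm : Measurable ζ) (hζ : ∀ ω, ‖ζ ω‖ ≤ c)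
    (hα₀ : 0 ≤ α) (hα₃ : α ≤ 3) (ha₁ : a₁ ≠ 0) (ha₂ : a₂ ≠ 0) :
    Integrable fun ω => ζ ω * conj (g (a₁ * ω)) * g (a₂ * ω) / ((|ω| ^ (α + 1) : ℝ) : ℂ) := by
  have hmeas : AEStronglyMeasurable
      (fun ω => ζ ω * conj (g (a₁ * ω)) * g (a₂ * ω) / ((|ω| ^ (α + 1) : ℝ) : ℂ)) :=
    (((hζm.mul (by fun_prop)).mul (by fun_prop)).div (by fun_prop)).aestronglyMeasurable
  rw [← integrableOn_univ, ← Set.union_compl_self (Set.Icc (-1) 1)]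
  refine IntegrableOn.union ?_ ?_
  · exact Measure.integrableOn_of_bounded (M := c * (C * a₁ ^ 2) * (C * a₂ ^ 2))
      measure_Icc_lt_top.ne hmeas (ae_restrict_of_forall_mem measurableSet_Icc fun ω hω =>
        norm_mul_conj_mul_div_abs_rpow_le_of_abs_le_one hgC hζ hα₃ (abs_le.2 hω))
  · have hdom := ((integrable_norm_sq_comp_mul_left_div_abs hadm ha₁).add
      (integrable_norm_sq_comp_mul_left_div_abs hadm ha₂)).const_mul (c / 2)
    refine hdom.integrableOn.mono' hmeas.restrict
      (ae_restrict_of_forall_mem measurableSet_Icc.compl fun ω hω => ?_)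
    exact norm_mul_conj_mul_div_abs_rpow_le_of_one_le_abs hζ hα₀
      (not_le.1 fun h => hω (abs_le.1 h)).le

end CrossSpectral

theorem crossSpectralDensity_integrable (M : ℕ) (hM : 2 ≤ M) (ψ : ℝ → ℂ)
    (hint : ∀ m ≤ M, Integrable (fun t : ℝ => (t : ℂ) ^ m * ψ t))
    (hvan : ∀ m < M, ∫ t : ℝ, (t : ℂ) ^ m * ψ t = 0)
    (ψhat : ℝ → ℂ)
    (hψhat : ∀ ω : ℝ, ψhat ω = ∫ t : ℝ, ψ t * Complex.exp (-(Complex.I * ω * t)))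
    (hadm : Integrable (fun ω : ℝ => ‖ψhat ω‖ ^ 2 / |ω|))
    (α : ℝ) (hα : α ∈ Set.Ioo (0:ℝ) 2)
    (a₁ a₂ : ℝ) (ha₁ : 0 < a₁) (ha₂ : 0 < a₂)
    (ζ : ℝ → ℂ) (hζm : Measurable ζ) (c : ℝ) (hζ : ∀ ω : ℝ, ‖ζ ω‖ ≤ c) :
    Integrable (fun ω : ℝ =>
      ζ ω * (starRingEnd ℂ) (ψhat (a₁ * ω)) * ψhat (a₂ * ω) / ((|ω| ^ (α + 1) : ℝ) : ℂ)) := by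
  have hψ : Integrable ψ := by simpa using hint 0 (by omega)
  have hbound : ∀ ω, ‖ψhat ω‖ ≤ 2 * (∫ t, t ^ 2 * ‖ψ t‖) * ω ^ 2 := fun ω => by
    rw [hψhat]
    exact norm_integral_mul_cexp_neg_I_mul_le hψ (by simpa using hint 1 (by omega)) (hint 2 hM)
      (by simpa using hvan 0 (by omega)) (by simpa using hvan 1 (by omega)) ω
  have hcont : Continuous ψhat := by
    simpa only [← funext hψhat] using continuous_integral_mul_cexp_neg_I_mul hψ
  exact integrable_mul_conj_mul_div_abs_rpow hcont.measurable hbound hadm hζm hζ hα.1.le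
    (by linarith [hα.2]) ha₁.ne' ha₂.ne'
end
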